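/- Let μ be the exponential distribution with rate 1, i.e. the measure on ℝ with density e^{−x} on [0,∞) and 0 elsewhere. Then the triple (log(4/3), log 3, log 12) minimizes the three-facility cost functional (y₁, y₂, y₃) ↦ ∫_0^∞ min(|x − y₁|, |x − y₂|, |x − y₃|) e^{−x} dx over ℝ³; the corresponding optimal percentile vector is (F_μ(log(4/3)), F_μ(log 3), F_μ(log 12)) = (1/4, 2/3, 11/12). -/

import Mathlib

open MeasureTheory Filter Topology ENNReal

/-- The 1-Wasserstein distance between two measures on ℝ, defined as the infimum of
transport costs over couplings. -/
noncomputable def W1 (α β : Measure ℝ) : ℝ :=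
  sInf {c : ℝ | ∃ π : Measure (ℝ × ℝ), IsProbabilityMeasure π ∧
    π.map Prod.fst = α ∧ π.map Prod.snd = β ∧ c = ∫ p, |p.1 - p.2| ∂π}

/-- The ∞-Wasserstein distance between two measures on ℝ. -/
noncomputable def Winf (α β : Measure ℝ) : ℝ :=
  sInf {c : ℝ | ∃ π : Measure (ℝ × ℝ), IsProbabilityMeasure π ∧
    π.map Prod.fst = α ∧ π.map Prod.snd = β ∧
    c = essSup (fun p : ℝ × ℝ => |p.1 - p.2|) π}

/-- `Pk k` : probability measures on ℝ supported on at most `k` points. -/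
def Pk (k : ℕ) : Set (Measure ℝ) :=
  {ν | IsProbabilityMeasure ν ∧ ∃ s : Finset ℝ, s.card ≤ k ∧ ν ((↑s : Set ℝ)ᶜ) = 0}

/-- Wasserstein projection distance of `μ` onto `k`-point measures. -/
noncomputable def projDist (k : ℕ) (μ : Measure ℝ) : ℝ :=
  sInf {c : ℝ | ∃ ν ∈ Pk k, c = W1 μ ν}

/-- Empirical measure of a tuple of points. -/
noncomputable def empMeas {n : ℕ} (x : Fin n → ℝ) : Measure ℝ :=
  ((n : ℝ≥0∞))⁻¹ • ∑ i : Fin n, Measure.dirac (x i)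

/-- Social cost of facility placement `y` for agents at `x`. -/
noncomputable def SC {n k : ℕ} (x : Fin n → ℝ) (y : Fin k → ℝ) : ℝ :=
  (n : ℝ)⁻¹ * ∑ i : Fin n, ⨅ j : Fin k, |x i - y j|

/-- Optimal social cost for `k` facilities. -/
noncomputable def SCopt (k : ℕ) {n : ℕ} (x : Fin n → ℝ) : ℝ :=
  ⨅ y : Fin k → ℝ, SC x y

/-- Topological support of a measure on ℝ. -/
def msupport (ν : Measure ℝ) : Set ℝ := {t : ℝ | ∀ U ∈ nhds t, ν U ≠ 0}

/-- Cumulative distribution function of a measure on ℝ. -/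
noncomputable def mcdf (μ : Measure ℝ) (t : ℝ) : ℝ := (μ (Set.Iic t)).toReal

/-- Quantile (generalized inverse c.d.f.) of a measure on ℝ. -/
noncomputable def mquantile (μ : Measure ℝ) (v : ℝ) : ℝ := sInf {t : ℝ | v ≤ mcdf μ t}

/-- Basic assumptions: `μ` is an absolutely continuous probability measure with density `ρ`,
supported on a (closed) interval `S`, with `ρ` positive on the interior of `S`, vanishing
outside `S`, and differentiable on `S`. -/
def BasicAssumptions (μ : Measure ℝ) : Prop :=
  IsProbabilityMeasure μ ∧
  ∃ (ρ : ℝ → ℝ) (S : Set ℝ),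
    μ = volume.withDensity (fun x => ENNReal.ofReal (ρ x)) ∧
    IsClosed S ∧ S.OrdConnected ∧ μ Sᶜ = 0 ∧
    (∀ x ∈ interior S, 0 < ρ x) ∧ (∀ x ∉ S, ρ x = 0) ∧
    DifferentiableOn ℝ ρ S

/-- The percentile mechanism: facility `j` is placed at the `(⌊(n-1)vⱼ⌋+1)`-th smallest
coordinate of `x`. -/
noncomputable def percentileMech {k : ℕ} (v : Fin k → ℝ) {n : ℕ} (x : Fin n → ℝ) :
    Fin k → ℝ :=
  fun j =>
    if h : 0 < n then
      x (Tuple.sort x ⟨min ⌊((n : ℝ) - 1) * v j⌋₊ (n - 1),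
        Nat.lt_of_le_of_lt (min_le_right _ _) (by omega)⟩)
    else 0

/-- Social cost of the percentile mechanism with percentile vector `v`. -/
noncomputable def SCv {k : ℕ} (v : Fin k → ℝ) {n : ℕ} (x : Fin n → ℝ) : ℝ :=
  SC x (percentileMech v x)

/-- Cumulative masses of the Voronoi cells of the points `y 0 < y 1 < ⋯ < y (k-1)`:
`cellBd μ y j = F_μ(z_j)` where `z_j = (y (j-1) + y j)/2` for `1 ≤ j ≤ k-1` (1-based),
with the conventions `F_μ(z_0) = 0` and `F_μ(z_k) = 1`. -/
noncomputable def cellBd (μ : Measure ℝ) {k : ℕ} (y : Fin k → ℝ) (j : ℕ) : ℝ :=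
  if h0 : j = 0 then 0
  else if hk : k ≤ j then 1
  else mcdf μ ((y ⟨j - 1, by omega⟩ + y ⟨j, by omega⟩) / 2)

/-- The measure `ν_{Q_v}`: atoms at the quantiles `F_μ^{[-1]}(vⱼ)` weighted by the masses of
their Voronoi cells. -/
noncomputable def nuQ (μ : Measure ℝ) {k : ℕ} (v : Fin k → ℝ) : Measure ℝ :=
  ∑ i : Fin k,
    ENNReal.ofReal (cellBd μ (fun j => mquantile μ (v j)) ((i : ℕ) + 1) -
        cellBd μ (fun j => mquantile μ (v j)) (i : ℕ)) •
      Measure.dirac (mquantile μ (v i))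

/-- The exponential distribution with rate 1. -/
noncomputable def expDist : Measure ℝ :=
  volume.withDensity fun x => ENNReal.ofReal (if 0 ≤ x then Real.exp (-x) else 0)

lemma expInt (g : ℝ → ℝ) :
    ∫ x, g x ∂expDist = ∫ x in Set.Ioi (0:ℝ), g x * Real.exp (-x) := by
  have hd : Measurable (fun x : ℝ => (if 0 ≤ x then Real.exp (-x) else 0).toNNReal) := by
    apply Measurable.real_toNNReal
    exact Measurable.ite measurableSet_Ici (by fun_prop) measurable_const
  have : expDist = volume.withDensity (fun x => ((if 0 ≤ x then Real.exp (-x) else 0).toNNReal : ℝ≥0∞)) := rfl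
  rw [this, integral_withDensity_eq_integral_smul hd g]
  have : (fun x => (if 0 ≤ x then Real.exp (-x) else 0).toNNReal • g x)
      = Set.indicator (Set.Ici (0:ℝ)) (fun x => g x * Real.exp (-x)) := by
    funext x
    simp only [NNReal.smul_def, Set.indicator, Set.mem_Ici]
    split_ifs with h
    · rw [Real.coe_toNNReal _ (Real.exp_nonneg _)]
      rw [smul_eq_mul, mul_comm]
    · simp
  rw [this, integral_indicator measurableSet_Ici, integral_Ici_eq_integral_Ioi]

lemma hdF (y x : ℝ) : HasDerivAt (fun x => (x - y + 1) * Real.exp (-x))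
    ((y - x) * Real.exp (-x)) x := by
  have h1 : HasDerivAt (fun x : ℝ => x - y + 1) 1 x :=
    ((hasDerivAt_id x).sub_const y).add_const 1
  have h2 : HasDerivAt (fun x : ℝ => Real.exp (-x)) (-Real.exp (-x)) x := by
    simpa using (hasDerivAt_neg x).exp
  have : HasDerivAt (fun x => (x - y + 1) * Real.exp (-x))
      (1 * Real.exp (-x) + (x - y + 1) * -Real.exp (-x)) x := h1.fun_mul h2
  convert this using 1
  ring

lemma contF (y : ℝ) : Continuous (fun x => (y - x) * Real.exp (-x)) := by fun_prop

lemma intA (y p q : ℝ) : ∫ x in p..q, (y - x) * Real.exp (-x)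
    = (q - y + 1) * Real.exp (-q) - (p - y + 1) * Real.exp (-p) :=
  intervalIntegral.integral_eq_sub_of_hasDerivAt (fun x _ => hdF y x)
    ((contF y).intervalIntegrable p q)

lemma tendF (y : ℝ) : Tendsto (fun x => (x - y + 1) * Real.exp (-x)) atTop (𝓝 0) := by
  have h1 := Real.tendsto_pow_mul_exp_neg_atTop_nhds_zero 1
  have h2 := Real.tendsto_exp_neg_atTop_nhds_zero
  have h3 := h1.add (h2.const_mul (1 - y))
  have h4 : (fun x : ℝ => x ^ 1 * Real.exp (-x) + (1 - y) * Real.exp (-x))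
      = fun x => (x - y + 1) * Real.exp (-x) := by funext x; ring
  rw [h4] at h3
  simpa using h3

lemma tailIntegrable (c m : ℝ) (h : c ≤ m) :
    IntegrableOn (fun x => (x - c) * Real.exp (-x)) (Set.Ioi m) := by
  apply integrableOn_Ioi_deriv_of_nonneg (g := fun x => -((x - c + 1) * Real.exp (-x))) (l := 0)
  · exact (Continuous.continuousWithinAt (by fun_prop))
  · intro x hx
    have : HasDerivAt (fun x => -((x - c + 1) * Real.exp (-x)))
        (-((c - x) * Real.exp (-x))) x := (hdF c x).fun_neg
    convert this using 1; ring
  · intro x hx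
    have hx' : c ≤ x := le_trans h (le_of_lt hx)
    exact mul_nonneg (by linarith) (Real.exp_nonneg _)
  · simpa using (tendF c).neg

lemma tailIntegral (c m : ℝ) (h : c ≤ m) :
    ∫ x in Set.Ioi m, (x - c) * Real.exp (-x) = (m - c + 1) * Real.exp (-m) := by
  have := integral_Ioi_of_hasDerivAt_of_nonneg
    (g := fun x => -((x - c + 1) * Real.exp (-x))) (g' := fun x => (x - c) * Real.exp (-x))
    (a := m) (l := 0) ?_ ?_ ?_ ?_
  · rw [this]; ring
  · exact (Continuous.continuousWithinAt (by fun_prop))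
  · intro x hx
    have : HasDerivAt (fun x => -((x - c + 1) * Real.exp (-x)))
        (-((c - x) * Real.exp (-x))) x := (hdF c x).fun_neg
    convert this using 1; ring
  · intro x hx
    have hx' : c ≤ x := le_trans h (le_of_lt hx)
    exact mul_nonneg (by linarith) (Real.exp_nonneg _)
  · simpa using (tendF c).neg

lemma absLeL {u v x : ℝ} (huv : u ≤ v) (hx : x ≤ (u+v)/2) : |x - u| ≤ |x - v| := by
  rcases abs_cases (x - u) with ⟨h1, h2⟩ | ⟨h1, h2⟩ <;>
    rcases abs_cases (x - v) with ⟨h3, h4⟩ | ⟨h3, h4⟩ <;> linarith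

lemma absLeR {u v x : ℝ} (huv : u ≤ v) (hx : (u+v)/2 ≤ x) : |x - v| ≤ |x - u| := by
  rcases abs_cases (x - u) with ⟨h1, h2⟩ | ⟨h1, h2⟩ <;>
    rcases abs_cases (x - v) with ⟨h3, h4⟩ | ⟨h3, h4⟩ <;> linarith

lemma contMin3 (a b c : ℝ) :
    Continuous (fun x => min |x - a| (min |x - b| |x - c|) * Real.exp (-x)) := by
  apply Continuous.mul _ (by fun_prop)
  exact Continuous.min (by fun_prop) (Continuous.min (by fun_prop) (by fun_prop))

lemma intB (y p q : ℝ) : ∫ x in p..q, (x - y) * Real.exp (-x)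
    = (p - y + 1) * Real.exp (-p) - (q - y + 1) * Real.exp (-q) := by
  have h := intA y p q
  have h2 : ∫ x in p..q, (x - y) * Real.exp (-x)
      = - ∫ x in p..q, (y - x) * Real.exp (-x) := by
    rw [← intervalIntegral.integral_neg]
    congr 1; funext x; ring
  rw [h2, h]; ring

lemma contAbsExp (y : ℝ) : Continuous (fun x => |x - y| * Real.exp (-x)) := by
  have h : Continuous (fun x : ℝ => |x - y|) := (continuous_id.sub continuous_const).abs
  exact h.mul (by fun_prop)

lemma mainCalc (a b c : ℝ) (h0 : 0 ≤ a) (hab : a ≤ b) (hbc : b ≤ c) :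
    ∫ x in Set.Ioi (0:ℝ), min |x - a| (min |x - b| |x - c|) * Real.exp (-x)
      = 2*Real.exp (-a) + 2*Real.exp (-b) + 2*Real.exp (-c)
        - 2*Real.exp (-((a+b)/2)) - 2*Real.exp (-((b+c)/2)) + a - 1 := by
  set F := fun x => min |x - a| (min |x - b| |x - c|) * Real.exp (-x) with hF
  have hFc : Continuous F := contMin3 a b c
  have h0m1 : (0:ℝ) ≤ (a+b)/2 := by linarith
  have ham1 : a ≤ (a+b)/2 := by linarith
  have hm1b : (a+b)/2 ≤ b := by linarith
  have hbm2 : b ≤ (b+c)/2 := by linarith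
  have hm2c : (b+c)/2 ≤ c := by linarith
  have hm1m2 : (a+b)/2 ≤ (b+c)/2 := by linarith
  have h0m2 : (0:ℝ) ≤ (b+c)/2 := by linarith
  -- pointwise identifications
  have eA : Set.EqOn F (fun x => |x - a| * Real.exp (-x)) (Set.Ioc 0 ((a+b)/2)) := by
    intro x hx
    have h1 : |x - a| ≤ |x - b| := absLeL hab hx.2
    have h2 : |x - a| ≤ |x - c| := absLeL (le_trans hab hbc) (by have := hx.2; linarith)
    simp only [hF]
    rw [min_eq_left (le_min h1 h2)]
  have eB : Set.EqOn F (fun x => |x - b| * Real.exp (-x)) (Set.Ioc ((a+b)/2) ((b+c)/2)) := by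
    intro x hx
    have h1 : |x - b| ≤ |x - a| := absLeR hab (le_of_lt hx.1)
    have h2 : |x - b| ≤ |x - c| := absLeL hbc hx.2
    simp only [hF]
    rw [min_eq_left h2, min_eq_right h1]
  have eC : Set.EqOn F (fun x => |x - c| * Real.exp (-x)) (Set.Ioi ((b+c)/2)) := by
    intro x hx
    have hx' : (b+c)/2 ≤ x := le_of_lt hx
    have h1 : |x - c| ≤ |x - b| := absLeR hbc hx'
    have h2 : |x - c| ≤ |x - a| := absLeR (le_trans hab hbc) (by linarith)
    simp only [hF]
    rw [min_eq_right h1, min_eq_right h2]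
  -- integrability on the tail
  have hIntTail : IntegrableOn F (Set.Ioi ((b+c)/2)) := by
    have hg : IntegrableOn (fun x => |x - c| * Real.exp (-x)) (Set.Ioi ((b+c)/2)) := by
      rw [← Set.Ioc_union_Ioi_eq_Ioi hm2c]
      apply IntegrableOn.union
      · exact (contAbsExp c).integrableOn_Ioc
      · refine (tailIntegrable c c le_rfl).congr_fun ?_ measurableSet_Ioi
        intro x hx
        have hx' : c < x := hx
        show (x - c) * Real.exp (-x) = |x - c| * Real.exp (-x)
        rw [abs_of_nonneg (by linarith)]
    exact hg.congr_fun (fun x hx => (eC hx).symm) measurableSet_Ioi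
  -- split the integral
  have hsplit : ∫ x in Set.Ioi (0:ℝ), F x
      = (∫ x in Set.Ioc (0:ℝ) ((b+c)/2), F x) + ∫ x in Set.Ioi ((b+c)/2), F x := by
    rw [← Set.Ioc_union_Ioi_eq_Ioi h0m2]
    exact setIntegral_union Set.Ioc_disjoint_Ioi_same measurableSet_Ioi
      hFc.integrableOn_Ioc hIntTail
  have hsplit2 : ∫ x in Set.Ioc (0:ℝ) ((b+c)/2), F x
      = (∫ x in Set.Ioc (0:ℝ) ((a+b)/2), F x) + ∫ x in Set.Ioc ((a+b)/2) ((b+c)/2), F x := by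
    rw [← Set.Ioc_union_Ioc_eq_Ioc h0m1 hm1m2]
    exact setIntegral_union (Set.Ioc_disjoint_Ioc_of_le le_rfl) measurableSet_Ioc
      hFc.integrableOn_Ioc hFc.integrableOn_Ioc
  -- piece A
  have hA : ∫ x in Set.Ioc (0:ℝ) ((a+b)/2), F x
      = 2*Real.exp (-a) - (1 - a) - ((a+b)/2 - a + 1) * Real.exp (-((a+b)/2)) := by
    rw [setIntegral_congr_fun measurableSet_Ioc eA,
        ← Set.Ioc_union_Ioc_eq_Ioc h0 ham1,
        setIntegral_union (Set.Ioc_disjoint_Ioc_of_le le_rfl) measurableSet_Ioc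
          (contAbsExp a).integrableOn_Ioc (contAbsExp a).integrableOn_Ioc]
    have e1 : ∫ x in Set.Ioc (0:ℝ) a, |x - a| * Real.exp (-x)
        = ∫ x in (0:ℝ)..a, (a - x) * Real.exp (-x) := by
      rw [intervalIntegral.integral_of_le h0]
      refine setIntegral_congr_fun measurableSet_Ioc (fun x hx => ?_)
      rw [abs_of_nonpos (by linarith [hx.2])]; ring
    have e2 : ∫ x in Set.Ioc a ((a+b)/2), |x - a| * Real.exp (-x)
        = ∫ x in a..((a+b)/2), (x - a) * Real.exp (-x) := by
      rw [intervalIntegral.integral_of_le ham1]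
      refine setIntegral_congr_fun measurableSet_Ioc (fun x hx => ?_)
      rw [abs_of_nonneg (by linarith [hx.1])]
    rw [e1, e2, intA a 0 a, intB a a ((a+b)/2)]
    simp only [neg_zero, Real.exp_zero]
    ring
  -- piece B
  have hB : ∫ x in Set.Ioc ((a+b)/2) ((b+c)/2), F x
      = 2*Real.exp (-b) - ((a+b)/2 - b + 1) * Real.exp (-((a+b)/2))
        - ((b+c)/2 - b + 1) * Real.exp (-((b+c)/2)) := by
    rw [setIntegral_congr_fun measurableSet_Ioc eB,
        ← Set.Ioc_union_Ioc_eq_Ioc hm1b hbm2,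
        setIntegral_union (Set.Ioc_disjoint_Ioc_of_le le_rfl) measurableSet_Ioc
          (contAbsExp b).integrableOn_Ioc (contAbsExp b).integrableOn_Ioc]
    have e1 : ∫ x in Set.Ioc ((a+b)/2) b, |x - b| * Real.exp (-x)
        = ∫ x in ((a+b)/2)..b, (b - x) * Real.exp (-x) := by
      rw [intervalIntegral.integral_of_le hm1b]
      refine setIntegral_congr_fun measurableSet_Ioc (fun x hx => ?_)
      rw [abs_of_nonpos (by linarith [hx.2])]; ring
    have e2 : ∫ x in Set.Ioc b ((b+c)/2), |x - b| * Real.exp (-x)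
        = ∫ x in b..((b+c)/2), (x - b) * Real.exp (-x) := by
      rw [intervalIntegral.integral_of_le hbm2]
      refine setIntegral_congr_fun measurableSet_Ioc (fun x hx => ?_)
      rw [abs_of_nonneg (by linarith [hx.1])]
    rw [e1, e2, intA b ((a+b)/2) b, intB b b ((b+c)/2)]
    ring
  -- piece C
  have hC : ∫ x in Set.Ioi ((b+c)/2), F x
      = 2*Real.exp (-c) - ((b+c)/2 - c + 1) * Real.exp (-((b+c)/2)) := by
    rw [setIntegral_congr_fun measurableSet_Ioi eC,
        ← Set.Ioc_union_Ioi_eq_Ioi hm2c,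
        setIntegral_union Set.Ioc_disjoint_Ioi_same measurableSet_Ioi
          (contAbsExp c).integrableOn_Ioc
          ((tailIntegrable c c le_rfl).congr_fun
            (fun x hx => by
              have hx' : c < x := hx
              show (x - c) * Real.exp (-x) = |x - c| * Real.exp (-x)
              rw [abs_of_nonneg (by linarith)])
            measurableSet_Ioi)]
    have e1 : ∫ x in Set.Ioc ((b+c)/2) c, |x - c| * Real.exp (-x)
        = ∫ x in ((b+c)/2)..c, (c - x) * Real.exp (-x) := by
      rw [intervalIntegral.integral_of_le hm2c]
      refine setIntegral_congr_fun measurableSet_Ioc (fun x hx => ?_)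
      rw [abs_of_nonpos (by linarith [hx.2])]; ring
    have e2 : ∫ x in Set.Ioi c, |x - c| * Real.exp (-x)
        = ∫ x in Set.Ioi c, (x - c) * Real.exp (-x) := by
      refine setIntegral_congr_fun measurableSet_Ioi (fun x hx => ?_)
      have hx' : c < x := hx
      show |x - c| * Real.exp (-x) = (x - c) * Real.exp (-x)
      rw [abs_of_nonneg (by linarith)]
    rw [e1, e2, intA c ((b+c)/2) c, tailIntegral c c le_rfl]
    ring
  rw [hsplit, hsplit2, hA, hB, hC]
  ring

lemma keyIneq (a b c : ℝ) :
    Real.log (4/3) ≤ 2*Real.exp (-a) + 2*Real.exp (-b) + 2*Real.exp (-c)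
      - 2*Real.exp (-((a+b)/2)) - 2*Real.exp (-((b+c)/2)) + a - 1 := by
  set u := Real.exp (-a/2) with hu
  set v := Real.exp (-b/2) with hv
  set w := Real.exp (-c/2) with hw
  have hu0 : 0 < u := Real.exp_pos _
  have hv0 : 0 < v := Real.exp_pos _
  have hw0 : 0 < w := Real.exp_pos _
  have ea : Real.exp (-a) = u * u := by rw [hu, ← Real.exp_add]; ring_nf
  have eb : Real.exp (-b) = v * v := by rw [hv, ← Real.exp_add]; ring_nf
  have ec : Real.exp (-c) = w * w := by rw [hw, ← Real.exp_add]; ring_nf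
  have eab : Real.exp (-((a+b)/2)) = u * v := by rw [hu, hv, ← Real.exp_add]; ring_nf
  have ebc : Real.exp (-((b+c)/2)) = v * w := by rw [hv, hw, ← Real.exp_add]; ring_nf
  have hlogu : Real.log u = -a/2 := by rw [hu, Real.log_exp]
  have hlog : Real.log (4/3 * (u*u)) ≤ 4/3 * (u*u) - 1 :=
    Real.log_le_sub_one_of_pos (by positivity)
  have hsplit : Real.log (4/3 * (u*u)) = Real.log (4/3) + Real.log u + Real.log u := by
    rw [Real.log_mul (by norm_num) (by positivity), Real.log_mul hu0.ne' hu0.ne']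
    ring
  rw [ea, eb, ec, eab, ebc]
  nlinarith [sq_nonneg (2*w - v), sq_nonneg (3*v - 2*u), hlog, hsplit, hlogu]

lemma absClamp (y x : ℝ) (hx : 0 < x) : |x - max y 0| ≤ |x - y| := by
  rcases le_total 0 y with h | h
  · rw [max_eq_left h]
  · rw [max_eq_right h, sub_zero, abs_of_pos hx, abs_of_nonneg (by linarith)]
    linarith

lemma min3IntegrableOn (a b c : ℝ) :
    IntegrableOn (fun x => min |x - a| (min |x - b| |x - c|) * Real.exp (-x))
      (Set.Ioi (0:ℝ)) := by
  have hg : IntegrableOn (fun x => (x - (-|a|)) * Real.exp (-x)) (Set.Ioi (0:ℝ)) :=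
    tailIntegrable (-|a|) 0 (neg_nonpos.mpr (abs_nonneg a))
  refine Integrable.mono' hg ((contMin3 a b c).aestronglyMeasurable.restrict) ?_
  rw [ae_restrict_iff' measurableSet_Ioi]
  filter_upwards with x
  intro hx
  have hx' : 0 < x := hx
  have h1 : 0 ≤ min |x - a| (min |x - b| |x - c|) :=
    le_min (abs_nonneg _) (le_min (abs_nonneg _) (abs_nonneg _))
  rw [Real.norm_eq_abs, abs_of_nonneg (mul_nonneg h1 (Real.exp_nonneg _))]
  have h2 : min |x - a| (min |x - b| |x - c|) ≤ x - (-|a|) := by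
    refine le_trans (min_le_left _ _) ?_
    have := abs_sub_abs_le_abs_sub x a
    rcases abs_cases (x - a) with ⟨e1, e2⟩ | ⟨e1, e2⟩ <;> rcases abs_cases a with ⟨f1, f2⟩ | ⟨f1, f2⟩ <;>
      rw [e1] <;> linarith [abs_nonneg a]
  exact mul_le_mul_of_nonneg_right h2 (Real.exp_nonneg _)

lemma lowerBound (a b c : ℝ) (hab : a ≤ b) (hbc : b ≤ c) :
    Real.log (4/3) ≤ ∫ x in Set.Ioi (0:ℝ), min |x - a| (min |x - b| |x - c|) * Real.exp (-x) := by
  set a' := max a 0 with ha'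
  set b' := max b 0 with hb'
  set c' := max c 0 with hc'
  have h0 : 0 ≤ a' := le_max_right _ _
  have hab' : a' ≤ b' := max_le_max hab le_rfl
  have hbc' : b' ≤ c' := max_le_max hbc le_rfl
  have hmono : ∫ x in Set.Ioi (0:ℝ), min |x - a'| (min |x - b'| |x - c'|) * Real.exp (-x)
      ≤ ∫ x in Set.Ioi (0:ℝ), min |x - a| (min |x - b| |x - c|) * Real.exp (-x) := by
    refine setIntegral_mono_on (min3IntegrableOn a' b' c') (min3IntegrableOn a b c)
      measurableSet_Ioi (fun x hx => ?_)
    have hx' : (0:ℝ) < x := hx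
    exact mul_le_mul_of_nonneg_right
      (min_le_min (absClamp a x hx')
        (min_le_min (absClamp b x hx') (absClamp c x hx'))) (Real.exp_nonneg _)
  calc Real.log (4/3) ≤ _ := keyIneq a' b' c'
    _ = _ := (mainCalc a' b' c' h0 hab' hbc').symm
    _ ≤ _ := hmono

lemma lowerBoundAll (y₁ y₂ y₃ : ℝ) :
    Real.log (4/3) ≤ ∫ x in Set.Ioi (0:ℝ),
      min |x - y₁| (min |x - y₂| |x - y₃|) * Real.exp (-x) := by
  have main : ∀ a b c : ℝ, a ≤ b → b ≤ c →
      (∀ x : ℝ, min |x - a| (min |x - b| |x - c|) = min |x - y₁| (min |x - y₂| |x - y₃|)) →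
      Real.log (4/3) ≤ ∫ x in Set.Ioi (0:ℝ),
        min |x - y₁| (min |x - y₂| |x - y₃|) * Real.exp (-x) := by
    intro a b c hab hbc hperm
    refine (lowerBound a b c hab hbc).trans_eq
      (setIntegral_congr_fun measurableSet_Ioi (fun x _ => ?_))
    rw [hperm x]
  have ac : ∀ p q r : ℝ, ∀ x : ℝ,
      min |x - p| (min |x - q| |x - r|) = min |x - q| (min |x - p| |x - r|) :=
    fun p q r x => min_left_comm _ _ _
  have ac2 : ∀ p q r : ℝ, ∀ x : ℝ,
      min |x - p| (min |x - q| |x - r|) = min |x - p| (min |x - r| |x - q|) :=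
    fun p q r x => by rw [min_comm |x - q| |x - r|]
  rcases le_total y₁ y₂ with h12 | h12 <;> rcases le_total y₂ y₃ with h23 | h23 <;>
    rcases le_total y₁ y₃ with h13 | h13
  · exact main y₁ y₂ y₃ h12 h23 (fun x => rfl)
  · exact main y₁ y₂ y₃ h12 h23 (fun x => rfl)
  · exact main y₁ y₃ y₂ h13 h23 (fun x => ac2 y₁ y₂ y₃ x |>.symm)
  · exact main y₃ y₁ y₂ h13 h12 (fun x => by rw [ac y₃ y₁ y₂ x, ac2 y₁ y₃ y₂ x])
  · exact main y₂ y₁ y₃ h12 h13 (fun x => (ac y₁ y₂ y₃ x).symm)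
  · exact main y₂ y₃ y₁ h23 h13 (fun x => by rw [ac2 y₂ y₃ y₁ x, ac y₂ y₁ y₃ x, ac2 y₁ y₂ y₃ x])
  · exact main y₃ y₂ y₁ h23 h12 (fun x => by rw [ac y₃ y₂ y₁ x, ac2 y₂ y₃ y₁ x, ac y₂ y₁ y₃ x, ac2 y₁ y₂ y₃ x])
  · exact main y₃ y₂ y₁ h23 h12 (fun x => by rw [ac y₃ y₂ y₁ x, ac2 y₂ y₃ y₁ x, ac y₂ y₁ y₃ x, ac2 y₁ y₂ y₃ x])

lemma mcdf_exp (t : ℝ) (ht : 0 ≤ t) : mcdf expDist t = 1 - Real.exp (-t) := by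
  have hind : (fun x : ℝ => if 0 ≤ x then Real.exp (-x) else 0)
      = Set.indicator (Set.Ici (0:ℝ)) (fun x => Real.exp (-x)) := by
    funext x
    simp [Set.indicator, Set.mem_Ici]
  have hInt : IntegrableOn (fun x : ℝ => if 0 ≤ x then Real.exp (-x) else 0) (Set.Iic t) := by
    rw [hind, IntegrableOn, integrable_indicator_iff measurableSet_Ici]
    rw [IntegrableOn, Measure.restrict_restrict measurableSet_Ici]
    have : Set.Ici (0:ℝ) ∩ Set.Iic t = Set.Icc 0 t := rfl
    rw [this]
    exact (by fun_prop : Continuous (fun x : ℝ => Real.exp (-x))).integrableOn_Icc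
  have h1 : expDist (Set.Iic t)
      = ENNReal.ofReal (∫ x in Set.Iic t, if 0 ≤ x then Real.exp (-x) else 0) := by
    rw [expDist, withDensity_apply _ measurableSet_Iic,
      ← ofReal_integral_eq_lintegral_ofReal hInt]
    · filter_upwards with x
      simp only [Pi.zero_apply]
      split_ifs with h
      · exact Real.exp_nonneg _
      · exact le_rfl
  have h2 : ∫ x in Set.Iic t, (if 0 ≤ x then Real.exp (-x) else 0)
      = 1 - Real.exp (-t) := by
    rw [hind, setIntegral_indicator measurableSet_Ici]
    have : Set.Iic t ∩ Set.Ici 0 = Set.Icc 0 t := by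
      rw [Set.inter_comm]; rfl
    rw [this]
    rw [integral_Icc_eq_integral_Ioc (f := fun x => Real.exp (-x)) (μ := volume)]
    rw [← intervalIntegral.integral_of_le ht]
    have hftc : ∫ x in (0:ℝ)..t, Real.exp (-x) = -Real.exp (-t) - (-Real.exp (-0)) := by
      refine intervalIntegral.integral_eq_sub_of_hasDerivAt (f := fun x => -Real.exp (-x)) (fun x _ => ?_) ?_
      · simpa using ((hasDerivAt_neg x).exp).fun_neg
      · exact (by fun_prop : Continuous fun x : ℝ => Real.exp (-x)).intervalIntegrable 0 t
    rw [hftc]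
    simp only [neg_zero, Real.exp_zero]
    ring
  rw [mcdf, h1, h2, ENNReal.toReal_ofReal]
  have : Real.exp (-t) ≤ 1 := Real.exp_le_one_iff.mpr (by linarith)
  linarith

lemma expHalf (p q r : ℝ) (hp : 0 < p) (hq : 0 < q) (hr : 0 < r) (h : p * q = r^2) :
    Real.exp (-((Real.log p + Real.log q)/2)) = r⁻¹ := by
  rw [← Real.log_mul hp.ne' hq.ne', h]
  rw [show r ^ 2 = r ^ (2:ℕ) by norm_num, Real.log_pow]
  push_cast
  rw [show -((2 * Real.log r)/2) = -Real.log r by ring, Real.exp_neg, Real.exp_log hr]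

lemma logSorted1 : Real.log (4 / 3) ≤ Real.log 3 := by
  apply Real.log_le_log (by norm_num) (by norm_num)

lemma logSorted2 : Real.log 3 ≤ Real.log 12 := by
  apply Real.log_le_log (by norm_num) (by norm_num)

lemma optValue :
    ∫ x in Set.Ioi (0:ℝ),
      min |x - Real.log (4 / 3)| (min |x - Real.log 3| |x - Real.log 12|) * Real.exp (-x)
      = Real.log (4 / 3) := by
  rw [mainCalc _ _ _ (Real.log_nonneg (by norm_num)) logSorted1 logSorted2]
  rw [expHalf (4/3) 3 2 (by norm_num) (by norm_num) (by norm_num) (by norm_num)]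
  rw [expHalf 3 12 6 (by norm_num) (by norm_num) (by norm_num) (by norm_num)]
  rw [Real.exp_neg, Real.exp_log (by norm_num : (0:ℝ) < 4/3)]
  rw [Real.exp_neg, Real.exp_log (by norm_num : (0:ℝ) < 3)]
  rw [Real.exp_neg, Real.exp_log (by norm_num : (0:ℝ) < 12)]
  norm_num


/-- For the rate-1 exponential distribution, `(log(4/3), log 3, log 12)`
minimizes the three-facility cost functional, and the corresponding percentile vector is
`(1/4, 2/3, 11/12)`. -/
theorem stmt18 :
    (∀ y₁ y₂ y₃ : ℝ,
      (∫ x, min |x - Real.log (4 / 3)| (min |x - Real.log 3| |x - Real.log 12|) ∂expDist) ≤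
        ∫ x, min |x - y₁| (min |x - y₂| |x - y₃|) ∂expDist) ∧
    mcdf expDist (Real.log (4 / 3)) = 1 / 4 ∧
    mcdf expDist (Real.log 3) = 2 / 3 ∧
    mcdf expDist (Real.log 12) = 11 / 12 := by
  refine ⟨?_, ?_, ?_, ?_⟩
  · intro y₁ y₂ y₃
    rw [expInt, expInt, optValue]
    exact lowerBoundAll y₁ y₂ y₃
  · rw [mcdf_exp _ (Real.log_nonneg (by norm_num)), Real.exp_neg,
      Real.exp_log (by norm_num : (0:ℝ) < 4/3)]
    norm_num
  · rw [mcdf_exp _ (Real.log_nonneg (by norm_num)), Real.exp_neg,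
      Real.exp_log (by norm_num : (0:ℝ) < 3)]
    norm_num
  · rw [mcdf_exp _ (Real.log_nonneg (by norm_num)), Real.exp_neg,
      Real.exp_log (by norm_num : (0:ℝ) < 12)]
    norm_num
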